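/- arXiv:1010.2031 — 2 statements merged into one kernel-verified Lean document; each statement's English description precedes it below -/
import Mathlib

section
/- Let a and b be positive elements of C such that X_a = X_b, i.e. {λ ∈ Σ_C : λ(a) > 0} = {λ ∈ Σ_C : λ(b) > 0}. Then for every positive rational q there exists n ∈ ℕ with (a − q·1)⁺ ≤ n·b. -/
/-!
Through the Gelfand transform, the order of `C` is the pointwise order of the functions
`φ ↦ φ x` on the compact space `Σ_C`, and characters commute with positive parts. So it suffices
to dominate `(f - q)⁺` by `n * g`, where `f φ = φ a` and `g φ = φ b`. Off the compact set
`{f ≥ q}` the left side vanishes; on it `g > 0` because `X_a = X_b`, so the continuous quotient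
`(f - q) / g` is bounded there, and any integer above that bound works.
-/

open WeakDual
open scoped ComplexOrder

lemma exists_nat_posPart_sub_le_nat_mul {X : Type*} [TopologicalSpace X] [CompactSpace X]
    {f g : X → ℝ} (hf : Continuous f) (hg : Continuous g) (hg₀ : ∀ x, 0 ≤ g x) {q : ℝ}
    (hfg : ∀ x, q ≤ f x → 0 < g x) : ∃ n : ℕ, ∀ x, (f x - q)⁺ ≤ n * g x := by
  set K := f ⁻¹' Set.Ici q
  have hK : IsCompact K := (isClosed_Ici.preimage hf).isCompact
  have hcont : ContinuousOn (fun x => (f x - q) / g x) K :=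
    (hf.sub continuous_const).continuousOn.div hg.continuousOn fun x hx => (hfg x hx).ne'
  obtain ⟨M, hM⟩ := hK.bddAbove_image hcont
  obtain ⟨n, hn⟩ := exists_nat_ge M
  refine ⟨n, fun x => ?_⟩
  by_cases hx : q ≤ f x
  · have hgx := hfg x hx
    calc (f x - q)⁺ = (f x - q) / g x * g x := by
          rw [posPart_eq_self.mpr (sub_nonneg.mpr hx), div_mul_cancel₀ _ hgx.ne']
      _ ≤ n * g x := by
          gcongr
          exact (hM ⟨x, hx, rfl⟩).trans hn
  · rw [posPart_eq_zero.mpr (by linarith)]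
    exact mul_nonneg n.cast_nonneg (hg₀ x)

namespace WeakDual.CharacterSpace

variable {C : Type*} [CommCStarAlgebra C]

lemma ofReal_re_apply {x : C} (hx : IsSelfAdjoint x) (φ : characterSpace ℂ C) :
    ((φ x).re : ℂ) = φ x :=
  Complex.conj_eq_iff_re.mp (hx.map φ).star_eq

lemma zero_lt_re_apply_iff {x : C} (hx : IsSelfAdjoint x) (φ : characterSpace ℂ C) :
    0 < (φ x).re ↔ 0 < φ x := by
  conv_rhs => rw [← ofReal_re_apply hx φ]
  exact Complex.zero_lt_real.symm

variable [PartialOrder C] [StarOrderedRing C]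

lemma le_iff_forall_apply_le {x y : C} : x ≤ y ↔ ∀ φ : characterSpace ℂ C, φ x ≤ φ y := by
  rw [← map_le_map_iff (gelfandStarTransform C), ContinuousMap.le_def]
  rfl

lemma apply_posPart {x : C} (hx : IsSelfAdjoint x) (φ : characterSpace ℂ C) :
    φ (x⁺) = ((φ x).re⁺ : ℝ) := by
  rw [CFC.posPart_def, cfcₙ_eq_cfc,
    StarAlgHomClass.map_cfc (S := ℂ) φ _ x (hφ := map_continuous φ), ← cfcₙ_eq_cfc,
    ← CFC.posPart_def, ← ofReal_re_apply hx φ]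
  exact CFC.posPart_algebraMap _

lemma re_apply_nonneg {x : C} (hx : 0 ≤ x) (φ : characterSpace ℂ C) : 0 ≤ (φ x).re :=
  (Complex.nonneg_iff.mp (map_nonneg φ hx)).1

end WeakDual.CharacterSpace

/-- Let `C` be a commutative unital C*-algebra (equipped with its canonical
order) and let `a, b` be positive elements of `C` with `X_a = X_b`, i.e. a character of `C`
is strictly positive on `a` iff it is strictly positive on `b`. Then for every positive
rational `q` there exists `n ∈ ℕ` with `(a - q·1)⁺ ≤ n • b`. -/
theorem statement8 {C : Type*} [CommCStarAlgebra C] [PartialOrder C] [StarOrderedRing C]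
    (a b : C) (ha : 0 ≤ a) (hb : 0 ≤ b)
    (hX : {lam : characterSpace ℂ C | 0 < lam a} = {lam : characterSpace ℂ C | 0 < lam b}) :
    ∀ q : ℚ, 0 < q → ∃ n : ℕ, (a - (q : ℂ) • 1)⁺ ≤ n • b := by
  intro q hq
  have hre_cont (x : C) : Continuous fun φ : characterSpace ℂ C => (φ x).re :=
    Complex.continuous_re.comp (gelfandTransform ℂ C x).continuous
  have hpos_of_ge (φ : characterSpace ℂ C) (hφ : (q : ℝ) ≤ (φ a).re) : 0 < (φ b).re := by
    have hφa : 0 < φ a := (CharacterSpace.zero_lt_re_apply_iff ha.isSelfAdjoint φ).mp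
      (lt_of_lt_of_le (by exact_mod_cast hq) hφ)
    exact (CharacterSpace.zero_lt_re_apply_iff hb.isSelfAdjoint φ).mpr
      ((Set.ext_iff.mp hX φ).mp hφa)
  obtain ⟨n, hn⟩ := exists_nat_posPart_sub_le_nat_mul (hre_cont a) (hre_cont b)
    (CharacterSpace.re_apply_nonneg hb) hpos_of_ge
  refine ⟨n, CharacterSpace.le_iff_forall_apply_le.mpr fun φ => ?_⟩
  have hsa : IsSelfAdjoint (a - (q : ℂ) • 1) := ha.isSelfAdjoint.sub (.smul (by simp) (.one C))
  rw [CharacterSpace.apply_posPart hsa, map_nsmul,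
    ← CharacterSpace.ofReal_re_apply hb.isSelfAdjoint, nsmul_eq_mul]
  norm_cast
  simpa using hn φ
end

section
/- Let F be an irreducible closed subset of Σ* (nonempty and not the union of two closed proper subsets). Suppose there is a context C such that F_C ≠ ∅ while F_D = ∅ for every context D properly contained in C. Then there is a unique λ ∈ Σ_C such that F is the closure of the point (C,λ) in Σ*. -/
open WeakDual

variable (A : Type*) [CStarAlgebra A]

/-- A classical context: a commutative unital closed star-subalgebra of `A`. -/
structure Context where
  carrier : Subalgebra ℂ A
  star_mem' : ∀ x ∈ carrier, star x ∈ carrier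
  isClosed' : IsClosed (carrier : Set A)
  mul_comm' : ∀ x ∈ carrier, ∀ y ∈ carrier, x * y = y * x

variable {A}

/-- The Gelfand spectrum of a context: the character space of `C`. -/
abbrev Context.Spec (C : Context A) : Type _ := characterSpace ℂ C.carrier

/-- The inclusion of a smaller context into a larger one, as a continuous linear map. -/
def Context.inclCLM {D C : Context A} (h : D.carrier ≤ C.carrier) :
    D.carrier →L[ℂ] C.carrier where
  toLinearMap := (Subalgebra.inclusion h).toLinearMap
  cont := continuous_induced_rng.mpr continuous_subtype_val

/-- Restriction of a character along an inclusion of contexts. -/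
noncomputable def Context.restrictChar {D C : Context A} (h : D.carrier ≤ C.carrier)
    (lam : C.Spec) : D.Spec :=
  ⟨(lam : WeakDual ℂ C.carrier).comp (Context.inclCLM h), by
    constructor
    · intro h0
      have h1 : (lam : WeakDual ℂ C.carrier).comp (Context.inclCLM h) (1 : D.carrier) = 0 := by
        rw [h0]; rfl
      have h2 : (lam : WeakDual ℂ C.carrier).comp (Context.inclCLM h) (1 : D.carrier) = 1 := by
        show lam ((Context.inclCLM h) (1 : D.carrier)) = 1
        have h3 : (Context.inclCLM h) (1 : D.carrier) = (1 : C.carrier) := rfl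
        rw [h3]
        exact map_one lam
      rw [h1] at h2
      exact zero_ne_one h2
    · intro x y
      show lam ((Context.inclCLM h) (x * y)) = lam ((Context.inclCLM h) x) * lam ((Context.inclCLM h) y)
      have h4 : (Context.inclCLM h) (x * y) = (Context.inclCLM h) x * (Context.inclCLM h) y := rfl
      rw [h4]
      exact map_mul lam _ _⟩

/-- The disjoint union of all Gelfand spectra of contexts. -/
abbrev SigmaSpace (A : Type*) [CStarAlgebra A] : Type _ := (C : Context A) × C.Spec

/-- The topology on the poset of contexts whose opens are the downward closed sets. -/
instance : TopologicalSpace (Context A) where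
  IsOpen s := ∀ C ∈ s, ∀ D : Context A, D.carrier ≤ C.carrier → D ∈ s
  isOpen_univ := fun _ _ _ _ => trivial
  isOpen_inter := fun s t hs ht C hC D hD => ⟨hs C hC.1 D hD, ht C hC.2 D hD⟩
  isOpen_sUnion := fun S hS C hC D hD => by
    obtain ⟨s, hsS, hCs⟩ := hC
    exact ⟨s, hsS, hS s hsS C hCs D hD⟩

/-- The topology `𝒪 Σ*` of the contravariant approach: a set is open iff each of its fibres
is open and it is closed under restriction of characters to smaller contexts. -/
instance : TopologicalSpace (SigmaSpace A) where
  IsOpen U := (∀ C : Context A, IsOpen {lam : C.Spec | Sigma.mk C lam ∈ U}) ∧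
    ∀ (C D : Context A) (h : D.carrier ≤ C.carrier) (lam : C.Spec),
      Sigma.mk C lam ∈ U → Sigma.mk D (Context.restrictChar h lam) ∈ U
  isOpen_univ := ⟨fun _ => isOpen_univ, fun _ _ _ _ _ => trivial⟩
  isOpen_inter := fun U V hU hV => ⟨fun C => (hU.1 C).inter (hV.1 C),
    fun C D h lam hm => ⟨hU.2 C D h lam hm.1, hV.2 C D h lam hm.2⟩⟩
  isOpen_sUnion := fun S hS => by
    constructor
    · intro C
      have h1 : {lam : C.Spec | Sigma.mk C lam ∈ ⋃₀ S} =
          ⋃ U ∈ S, {lam : C.Spec | Sigma.mk C lam ∈ U} := by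
        ext lam; simp
      rw [h1]
      exact isOpen_biUnion fun U hU => (hS U hU).1 C
    · rintro C D h lam ⟨U, hUS, hmU⟩
      exact ⟨U, hUS, (hS U hUS).2 C D h lam hmU⟩

/-!
The projection `Σ* → contexts` is continuous for the topology of down-sets, so the
contexts met by `F` form an irreducible set there; since an up-set and a principal down-set are
open, irreducibility forces every point of `F` to lie above the minimal context `C`. Restricting
to `C` is then a continuous map from the irreducible space `F` to the Hausdorff space `Σ_C`, hence
constant, with value some `λ`; and a closed set containing a point contains everything above it.
-/

namespace Context

lemma isOpen_iff {s : Set (Context A)} :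
    IsOpen s ↔ ∀ C ∈ s, ∀ D : Context A, D.carrier ≤ C.carrier → D ∈ s :=
  Iff.rfl

lemma isOpen_setOf_not_le (C : Context A) : IsOpen {E : Context A | ¬ C.carrier ≤ E.carrier} :=
  isOpen_iff.2 fun _ hE _ hDE hCD => hE (hCD.trans hDE)

lemma isOpen_setOf_le (C : Context A) : IsOpen {E : Context A | E.carrier ≤ C.carrier} :=
  isOpen_iff.2 fun _ hE _ hDE => hDE.trans hE

lemma le_of_isPreirreducible {S : Set (Context A)} (hS : IsPreirreducible S) {C E : Context A}
    (hC : C ∈ S) (hE : E ∈ S) (hmin : ∀ D ∈ S, ¬ D.carrier < C.carrier) :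
    C.carrier ≤ E.carrier := by
  by_contra hCE
  obtain ⟨D, hDS, hCD, hDC⟩ :=
    hS _ _ (isOpen_setOf_not_le C) (isOpen_setOf_le C) ⟨E, hE, hCE⟩ ⟨C, hC, le_refl C.carrier⟩
  exact hmin D hDS (lt_of_le_not_ge hDC hCD)

lemma restrictChar_refl {C : Context A} (lam : C.Spec) : restrictChar le_rfl lam = lam :=
  rfl

lemma continuous_restrictChar {D C : Context A} (h : D.carrier ≤ C.carrier) :
    Continuous (restrictChar h : C.Spec → D.Spec) :=
  .subtype_mk (WeakDual.continuous_of_continuous_eval fun x =>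
    (WeakDual.eval_continuous (inclCLM h x)).comp continuous_subtype_val) _

end Context

namespace SigmaSpace

open Context

lemma isOpen_iff {U : Set (SigmaSpace A)} :
    IsOpen U ↔ (∀ C : Context A, IsOpen {lam : C.Spec | Sigma.mk C lam ∈ U}) ∧
      ∀ (C D : Context A) (h : D.carrier ≤ C.carrier) (lam : C.Spec),
        Sigma.mk C lam ∈ U → Sigma.mk D (restrictChar h lam) ∈ U :=
  Iff.rfl

lemma continuous_fst : Continuous (Sigma.fst : SigmaSpace A → Context A) where
  isOpen_preimage s hs := by
    refine isOpen_iff.2 ⟨fun C => ?_, fun C D h _ hC => Context.isOpen_iff.1 hs C hC D h⟩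
    by_cases hC : C ∈ s <;> simp [hC]

lemma mem_of_restrictChar_mem {K : Set (SigmaSpace A)} (hK : IsClosed K)
    {C D : Context A} (h : D.carrier ≤ C.carrier) {lam : C.Spec}
    (hm : (⟨D, restrictChar h lam⟩ : SigmaSpace A) ∈ K) : (⟨C, lam⟩ : SigmaSpace A) ∈ K :=
  by_contra fun hn => hK.isOpen_compl.2 C D h lam hn hm

lemma isClosed_setOf_restrictChar_mem {C : Context A} {T : Set C.Spec} (hT : IsClosed T) :
    IsClosed {q : SigmaSpace A | ∃ h : C.carrier ≤ q.1.carrier, restrictChar h q.2 ∈ T} := by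
  refine isOpen_compl_iff.1 (isOpen_iff.2 ⟨fun E => ?_, fun E D h lam hm ⟨hCD, hT⟩ =>
    hm ⟨hCD.trans h, hT⟩⟩)
  by_cases hCE : C.carrier ≤ E.carrier
  · convert hT.isOpen_compl.preimage (continuous_restrictChar hCE) using 1
    ext lam
    exact ⟨fun hl ht => hl ⟨hCE, ht⟩, fun hl ⟨_, ht⟩ => hl ht⟩
  · convert isOpen_univ using 1
    exact Set.eq_univ_of_forall fun lam ⟨hCE', _⟩ => hCE hCE'

lemma continuous_restrictChar_of_forall_le {S : Set (SigmaSpace A)} {C : Context A}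
    (hS : ∀ q ∈ S, C.carrier ≤ q.1.carrier) :
    Continuous fun q : S => restrictChar (hS q q.2) q.1.2 := by
  refine continuous_iff_isClosed.2 fun T hT => ?_
  convert (isClosed_setOf_restrictChar_mem hT).preimage continuous_subtype_val using 1
  ext q
  exact ⟨fun hq => ⟨hS q q.2, hq⟩, fun ⟨_, hq⟩ => hq⟩

end SigmaSpace

open Context SigmaSpace

/-- Let `F` be an irreducible closed subset of `Σ*`. If there is a context
`C` whose fibre `F_C` is nonempty while the fibre `F_D` is empty for every context `D`
properly contained in `C`, then there is a unique `λ ∈ Σ_C` such that `F` is the closure of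
the point `(C, λ)`. -/
theorem statement13 (F : Set (SigmaSpace A)) (hFcl : IsClosed F) (hFirr : IsIrreducible F)
    (C : Context A) (hC : {lam : C.Spec | (⟨C, lam⟩ : SigmaSpace A) ∈ F}.Nonempty)
    (hmin : ∀ D : Context A, D.carrier < C.carrier →
      {lam : D.Spec | (⟨D, lam⟩ : SigmaSpace A) ∈ F} = ∅) :
    ∃! lam : C.Spec, F = closure {(⟨C, lam⟩ : SigmaSpace A)} := by
  obtain ⟨lam, hlam⟩ := hC
  have hup : ∀ q ∈ F, C.carrier ≤ q.1.carrier := fun q hq =>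
    le_of_isPreirreducible (hFirr.isPreirreducible.image _ continuous_fst.continuousOn)
      ⟨_, hlam, rfl⟩ ⟨q, hq, rfl⟩ fun _ ⟨p, hp, hpD⟩ hlt => (hmin _ (hpD ▸ hlt)).subset hp
  have hconst : ∀ q : F, restrictChar (hup q q.2) q.1.2 = lam := fun q =>
    ((Subtype.preirreducibleSpace hFirr.isPreirreducible).isPreirreducible_univ.image _
      (continuous_restrictChar_of_forall_le hup).continuousOn).subsingleton
      ⟨q, trivial, rfl⟩ ⟨⟨_, hlam⟩, trivial, rfl⟩
  refine ⟨lam, subset_antisymm (fun q hq => ?_)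
    (closure_minimal (Set.singleton_subset_iff.2 hlam) hFcl), fun lam' hlam' => ?_⟩
  · exact mem_of_restrictChar_mem isClosed_closure (hup q hq) (hconst ⟨q, hq⟩ ▸ subset_closure rfl)
  · have hmem : (⟨C, lam'⟩ : SigmaSpace A) ∈ F := hlam' ▸ subset_closure rfl
    exact (restrictChar_refl lam').symm.trans (hconst ⟨_, hmem⟩)
end
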